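/- arXiv:2310.10558 — 3 statements merged into one kernel-verified Lean document; each statement's English description precedes it below -/
import Mathlib

section
/- Let 0 < e < 1, h, δ > 0 and 0 < m < m₀ := (1−√e)²/(h+δ). Then the quadratic (h+δ)x² + [m(h+δ) + e − 1]x + me = 0 has two distinct positive real roots ū₁ > ū₂ > 0 given by ū_{1,2} = [1−e−m(h+δ) ± √Δ₁(m)]/(2(h+δ)), where Δ₁(m) = [m(h+δ)+e−1]² − 4(h+δ)me > 0. -/
open Real

/-! With `e = s²` for `s = √e ∈ (0, 1)` and `t = m (h + δ)`, the discriminant factors as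
`Δ₁ = ((1 - s)² - t) ((1 + s)² - t)`, which is positive exactly when `t < (1 - s)²`, i.e. `m < m₀`.
The same bound makes the linear coefficient `t + s² - 1` negative, and a quadratic with positive
leading and constant coefficients and a negative linear one has both roots positive. -/

section Quadratic

variable {a b c : ℝ}

theorem quadratic_eq_zero_iff_of_discrim_nonneg (ha : a ≠ 0) (hD : 0 ≤ discrim a b c) (x : ℝ) :
    a * x ^ 2 + b * x + c = 0 ↔
      x = (-b + √(discrim a b c)) / (2 * a) ∨ x = (-b - √(discrim a b c)) / (2 * a) := by
  rw [sq x]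
  exact quadratic_eq_zero_iff ha (mul_self_sqrt hD).symm x

theorem sqrt_discrim_lt_neg (ha : 0 < a) (hb : b < 0) (hc : 0 < c) :
    √(discrim a b c) < -b := by
  rw [sqrt_lt' (neg_pos.2 hb), discrim]
  nlinarith [mul_pos ha hc]

theorem quadratic_smaller_root_pos (ha : 0 < a) (hb : b < 0) (hc : 0 < c) :
    0 < (-b - √(discrim a b c)) / (2 * a) :=
  div_pos (sub_pos.2 (sqrt_discrim_lt_neg ha hb hc)) (by positivity)

theorem quadratic_smaller_root_lt (ha : 0 < a) (hD : 0 < discrim a b c) :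
    (-b - √(discrim a b c)) / (2 * a) < (-b + √(discrim a b c)) / (2 * a) := by
  gcongr
  linarith [sqrt_pos.2 hD]

end Quadratic

section Coefficients

variable {a m s : ℝ}

theorem discrim_pos_of_lt_one_sub_sq (hs : 0 ≤ s) (hm : m * a < (1 - s) ^ 2) :
    0 < discrim a (m * a + s ^ 2 - 1) (m * s ^ 2) := by
  rw [discrim, show (m * a + s ^ 2 - 1) ^ 2 - 4 * a * (m * s ^ 2)
      = ((1 - s) ^ 2 - m * a) * ((1 + s) ^ 2 - m * a) by ring]
  exact mul_pos (by linarith) (by nlinarith)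

theorem linear_coeff_neg_of_lt_one_sub_sq (hs0 : 0 ≤ s) (hs1 : s ≤ 1)
    (hm : m * a < (1 - s) ^ 2) : m * a + s ^ 2 - 1 < 0 := by
  nlinarith

end Coefficients

/-- For 0 < e < 1, h, δ > 0 and 0 < m < m₀ = (1−√e)²/(h+δ), the
quadratic (h+δ)x² + [m(h+δ)+e−1]x + me = 0 has two distinct positive roots
ū₁ > ū₂ > 0 given by the quadratic formula, with positive discriminant Δ₁(m). -/
theorem stmt3 (e h δ m : ℝ) (he0 : 0 < e) (he1 : e < 1) (hh : 0 < h) (hδ : 0 < δ)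
    (hm0 : 0 < m) (hm1 : m < (1 - Real.sqrt e) ^ 2 / (h + δ)) :
    let Δ₁ := (m * (h + δ) + e - 1) ^ 2 - 4 * (h + δ) * (m * e)
    let u₁ := (1 - e - m * (h + δ) + Real.sqrt Δ₁) / (2 * (h + δ))
    let u₂ := (1 - e - m * (h + δ) - Real.sqrt Δ₁) / (2 * (h + δ))
    0 < Δ₁ ∧ 0 < u₂ ∧ u₂ < u₁ ∧
    (h + δ) * u₁ ^ 2 + (m * (h + δ) + e - 1) * u₁ + m * e = 0 ∧
    (h + δ) * u₂ ^ 2 + (m * (h + δ) + e - 1) * u₂ + m * e = 0 ∧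
    (∀ x : ℝ, (h + δ) * x ^ 2 + (m * (h + δ) + e - 1) * x + m * e = 0 →
      x = u₁ ∨ x = u₂) := by
  obtain ⟨s, hs0, hs1, rfl⟩ : ∃ s, 0 < s ∧ s < 1 ∧ e = s ^ 2 :=
    ⟨√e, sqrt_pos.2 he0, (sqrt_lt' one_pos).2 (by simpa), (sq_sqrt he0.le).symm⟩
  rw [sqrt_sq hs0.le] at hm1
  have ha : 0 < h + δ := add_pos hh hδ
  have hm : m * (h + δ) < (1 - s) ^ 2 := (lt_div_iff₀ ha).1 hm1
  have hD := discrim_pos_of_lt_one_sub_sq hs0.le hm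
  have hb := linear_coeff_neg_of_lt_one_sub_sq hs0.le hs1.le hm
  have hroots := quadratic_eq_zero_iff_of_discrim_nonneg ha.ne' hD.le
  rw [show 1 - s ^ 2 - m * (h + δ) = -(m * (h + δ) + s ^ 2 - 1) by ring]
  exact ⟨hD, quadratic_smaller_root_pos ha hb (by positivity), quadratic_smaller_root_lt ha hD,
    (hroots _).2 (.inl rfl), (hroots _).2 (.inr rfl), fun x => (hroots x).1⟩
end

section
/- Let m, h, δ, s > 0, B = sδ/(s+δ), B < e < 1, m = m* = (1−√(e−B))²/(h+B), u₃ = (1+B−e−m*(h+B))/(2(h+B)), v₃ = (s+δu₃)/(s+δ). Then the Jacobian of the system u' = u(u/(m+u) − e − hu) + δu(v−u), v' = sv(1−v) + δv(u−v) at (u₃,v₃) has determinant zero and trace equal to −(B + 2δ²/(s+δ))u₃ − s < 0; in particular 0 is an eigenvalue and the other eigenvalue is negative. -/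
open Real Matrix

/-- For B < e < 1 and m = m* = (1−√(e−B))²/(h+B), with
u₃ = (1+B−e−m(h+B))/(2(h+B)) and v₃ = (s+δu₃)/(s+δ), the Jacobian
J = [[(2m+u)u/(m+u)² − 2(h+δ)u − e + δv, δu],[δv, s − 2(s+δ)v + δu]]
at (u₃,v₃) has determinant zero and trace −(B + 2δ²/(s+δ))u₃ − s < 0;
in particular 0 is an eigenvalue and the other eigenvalue is negative. -/
theorem stmt13 (m h δ s e : ℝ) (hm : 0 < m) (hh : 0 < h) (hδ : 0 < δ) (hs : 0 < s)
    (B : ℝ) (hB : B = s * δ / (s + δ)) (heB : B < e) (he1 : e < 1)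
    (hmstar : m = (1 - Real.sqrt (e - B)) ^ 2 / (h + B)) :
    let u₃ := (1 + B - e - m * (h + B)) / (2 * (h + B))
    let v₃ := (s + δ * u₃) / (s + δ)
    let J : Matrix (Fin 2) (Fin 2) ℝ :=
      !![(2 * m + u₃) * u₃ / (m + u₃) ^ 2 - 2 * (h + δ) * u₃ - e + δ * v₃, δ * u₃;
         δ * v₃, s - 2 * (s + δ) * v₃ + δ * u₃]
    J.det = 0 ∧
    J.trace = -(B + 2 * δ ^ 2 / (s + δ)) * u₃ - s ∧
    J.trace < 0 := by
  intro u₃ v₃ J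
  have hsδ : (0:ℝ) < s + δ := by linarith
  have hB0 : 0 < B := by rw [hB]; positivity
  have hhB : (0:ℝ) < h + B := by linarith
  set r := Real.sqrt (e - B) with hrdef
  have hrsq : r ^ 2 = e - B := Real.sq_sqrt (by linarith)
  have hr0 : 0 < r := Real.sqrt_pos.mpr (by linarith)
  have hr1 : r < 1 := by nlinarith
  have hE : e = B + r ^ 2 := by linarith
  have h1r : (0:ℝ) < 1 - r := by linarith
  have hu3 : u₃ = r * (1 - r) / (h + B) := by
    show (1 + B - e - m * (h + B)) / (2 * (h + B)) = _
    rw [hmstar, hE]; field_simp; ring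
  have hu3pos : 0 < u₃ := by rw [hu3]; positivity
  have hmu : m + u₃ = (1 - r) / (h + B) := by
    rw [hmstar, hu3]; field_simp; ring
  have hv3 : v₃ = (s + δ * u₃) / (s + δ) := rfl
  have hJ00 : (2 * m + u₃) * u₃ / (m + u₃) ^ 2 - 2 * (h + δ) * u₃ - e + δ * v₃
      = -(δ ^ 2 / (s + δ)) * u₃ := by
    rw [hmu, hv3, hu3, hmstar, hE, hB]
    field_simp
    ring
  have hJ11 : s - 2 * (s + δ) * v₃ + δ * u₃ = -s - δ * u₃ := by
    rw [hv3]; field_simp; ring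
  have hdet : J.det = 0 := by
    show (!![(2 * m + u₃) * u₃ / (m + u₃) ^ 2 - 2 * (h + δ) * u₃ - e + δ * v₃, δ * u₃;
         δ * v₃, s - 2 * (s + δ) * v₃ + δ * u₃] : Matrix (Fin 2) (Fin 2) ℝ).det = 0
    rw [Matrix.det_fin_two_of, hJ00, hJ11, hv3]
    field_simp
    ring
  have htr : J.trace = -(B + 2 * δ ^ 2 / (s + δ)) * u₃ - s := by
    show (!![(2 * m + u₃) * u₃ / (m + u₃) ^ 2 - 2 * (h + δ) * u₃ - e + δ * v₃, δ * u₃;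
         δ * v₃, s - 2 * (s + δ) * v₃ + δ * u₃] : Matrix (Fin 2) (Fin 2) ℝ).trace
         = -(B + 2 * δ ^ 2 / (s + δ)) * u₃ - s
    rw [Matrix.trace_fin_two_of, hJ00, hJ11, hB]
    field_simp
    ring
  refine ⟨hdet, htr, ?_⟩
  rw [htr]
  have : 0 < (B + 2 * δ ^ 2 / (s + δ)) * u₃ := by positivity
  linarith
end

section
/- Fix h, δ, s > 0, B = sδ/(s+δ), and e with 0 < e < B (so e < 1). For m > 0 let u₁(m) be the unique positive root of (h+B)u² + [m(h+B)+e−1−B]u + m(e−B) = 0. Then u₁ is differentiable in m and du₁/dm = −u₁/[C(m+u₁)²] < 0, where C = (h+B) − m/(m+u₁)² > 0. Consequently the total population T(m) = u₁(m) + (s+δu₁(m))/(s+δ) is strictly decreasing in m. -/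
/-
Writing `a = h + B` and `γ = e - B < 0`, the equilibrium relation `u/(m+u) = a u + γ` is the
quadratic `a u² + (m a + γ - 1) u + m γ = 0`. Its constant term `m γ` is negative, so the roots
have opposite signs and `u₁` is the `+` branch of the quadratic formula, hence differentiable.
Differentiating the relation gives `u₁' = -(a u₁ + γ) / (2 a u₁ + m a + γ - 1)`; on the
equilibrium the numerator is `u₁/(m+u₁)` and the denominator is `C (m+u₁)`, and the denominator
is positive because `u₁` is the positive root. Finally `T` is an increasing affine function of `u₁`.
-/

open Set Filter Topology

noncomputable def quadraticPlusRoot (a b c : ℝ) : ℝ := (-b + √(discrim a b c)) / (2 * a)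

section Quadratic

variable {a b c x : ℝ}

lemma discrim_pos_of_pos_of_neg (ha : 0 < a) (hc : c < 0) : 0 < discrim a b c := by
  unfold discrim; nlinarith [sq_nonneg b]

lemma eq_quadraticPlusRoot_of_pos (ha : 0 < a) (hc : c < 0) (hx : 0 < x)
    (hroot : a * x ^ 2 + b * x + c = 0) : x = quadraticPlusRoot a b c := by
  have hD := discrim_pos_of_pos_of_neg (b := b) ha hc
  have hb : -b < √(discrim a b c) := by
    refine (neg_le_abs b).trans_lt ((Real.lt_sqrt (abs_nonneg b)).2 ?_)
    rw [sq_abs]; unfold discrim; nlinarith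
  rcases (quadratic_eq_zero_iff ha.ne' (Real.mul_self_sqrt hD.le).symm x).1
    (by linear_combination hroot) with hplus | hminus
  · exact hplus
  · have : x < 0 := hminus ▸ div_neg_of_neg_of_pos (by linarith) (by positivity)
    linarith

lemma two_mul_mul_add_pos_of_root (ha : 0 ≤ a) (hc : c < 0) (hx : 0 < x)
    (hroot : a * x ^ 2 + b * x + c = 0) : 0 < 2 * a * x + b := by
  have : (2 * a * x + b) * x = a * x ^ 2 - c := by linear_combination hroot
  exact pos_of_mul_pos_left (this ▸ by nlinarith [sq_nonneg x]) hx.le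

lemma differentiableAt_quadraticPlusRoot {b c : ℝ → ℝ} {m : ℝ} (hb : DifferentiableAt ℝ b m)
    (hc : DifferentiableAt ℝ c m) (hD : discrim a (b m) (c m) ≠ 0) :
    DifferentiableAt ℝ (fun x => quadraticPlusRoot a (b x) (c x)) m := by
  unfold quadraticPlusRoot
  exact (hb.neg.add (DifferentiableAt.sqrt (by unfold discrim; fun_prop) hD)).div_const _

lemma quadratic_implicit_deriv {b c f : ℝ → ℝ} {b' c' f' m : ℝ} (hf : HasDerivAt f f' m)
    (hb : HasDerivAt b b' m) (hc : HasDerivAt c c' m)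
    (hQ : ∀ᶠ x in 𝓝 m, a * f x ^ 2 + b x * f x + c x = 0) :
    (2 * a * f m + b m) * f' + b' * f m + c' = 0 := by
  have hlhs := (((hf.pow 2).const_mul a).add (hb.mul hf)).add hc
  have hzero := (hasDerivAt_const m (0 : ℝ)).congr_of_eventuallyEq hQ
  linear_combination hlhs.unique hzero

end Quadratic

section Equilibrium

variable {a γ m u : ℝ}

lemma equilibrium_relation (hQ : a * u ^ 2 + (m * a + γ - 1) * u + m * γ = 0) :
    (m + u) * (a * u + γ) = u := by
  linear_combination hQ

lemma equilibrium_partial_u (hQ : a * u ^ 2 + (m * a + γ - 1) * u + m * γ = 0) :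
    (m + u) * (2 * a * u + (m * a + γ - 1)) = a * (m + u) ^ 2 - m := by
  linear_combination hQ

theorem hasDerivAt_equilibrium {u₁ : ℝ → ℝ} (ha : 0 < a) (hγ : γ < 0)
    (hroot : ∀ m : ℝ, 0 < m →
      0 < u₁ m ∧ a * u₁ m ^ 2 + (m * a + γ - 1) * u₁ m + m * γ = 0) (hm : 0 < m) :
    a - m / (m + u₁ m) ^ 2 > 0 ∧
      HasDerivAt u₁ (-(u₁ m) / ((a - m / (m + u₁ m) ^ 2) * (m + u₁ m) ^ 2)) m ∧
      -(u₁ m) / ((a - m / (m + u₁ m) ^ 2) * (m + u₁ m) ^ 2) < 0 := by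
  have hroot_near : ∀ᶠ x in 𝓝 m, 0 < u₁ x ∧ a * u₁ x ^ 2 + (x * a + γ - 1) * u₁ x + x * γ = 0 :=
    (eventually_gt_nhds hm).mono hroot
  have hformula : u₁ =ᶠ[𝓝 m] fun x => quadraticPlusRoot a (x * a + γ - 1) (x * γ) :=
    (eventually_gt_nhds hm).mono fun x hx =>
      eq_quadraticPlusRoot_of_pos ha (mul_neg_of_pos_of_neg hx hγ) (hroot x hx).1 (hroot x hx).2
  have hdiff : DifferentiableAt ℝ u₁ m :=
    (differentiableAt_quadraticPlusRoot (b := fun x => x * a + γ - 1) (c := fun x => x * γ)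
      (by fun_prop) (by fun_prop)
      (discrim_pos_of_pos_of_neg ha (mul_neg_of_pos_of_neg hm hγ)).ne').congr_of_eventuallyEq
      hformula
  have himplicit := quadratic_implicit_deriv hdiff.hasDerivAt
    ((hasDerivAt_mul_const a).add_const (γ - 1)) (hasDerivAt_mul_const γ)
    (hroot_near.mono fun x hx => by linear_combination hx.2)
  obtain ⟨hu, hQ⟩ := hroot m hm
  set U := u₁ m
  have hmU : 0 < m + U := by linarith
  have hUpartial := two_mul_mul_add_pos_of_root ha.le (mul_neg_of_pos_of_neg hm hγ) hu hQ
  have hdenom : (a - m / (m + U) ^ 2) * (m + U) ^ 2 = (m + U) * (2 * a * U + (m * a + γ - 1)) := by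
    rw [equilibrium_partial_u hQ]; field_simp
  have hdenom_pos : 0 < (a - m / (m + U) ^ 2) * (m + U) ^ 2 := hdenom ▸ mul_pos hmU hUpartial
  have hderiv : deriv u₁ m = -U / ((a - m / (m + U) ^ 2) * (m + U) ^ 2) := by
    rw [eq_div_iff hdenom_pos.ne', hdenom]
    linear_combination (m + U) * himplicit - equilibrium_relation hQ
  exact ⟨pos_of_mul_pos_left hdenom_pos (sq_nonneg _), hderiv ▸ hdiff.hasDerivAt,
    div_neg_of_neg_of_pos (by linarith) hdenom_pos⟩

end Equilibrium

theorem stmt14_general (h δ s e : ℝ) (hh : 0 < h) (hδ : 0 < δ) (hs : 0 < s)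
    (B : ℝ) (hB : B = s * δ / (s + δ)) (heB : e < B)
    (u₁ : ℝ → ℝ)
    (hroot : ∀ m : ℝ, 0 < m → 0 < u₁ m ∧
      (h + B) * (u₁ m) ^ 2 + (m * (h + B) + e - 1 - B) * (u₁ m) + m * (e - B) = 0) :
    (∀ m : ℝ, 0 < m →
      ((h + B) - m / (m + u₁ m) ^ 2 > 0) ∧
      HasDerivAt u₁ (-(u₁ m) / (((h + B) - m / (m + u₁ m) ^ 2) * (m + u₁ m) ^ 2)) m ∧
      -(u₁ m) / (((h + B) - m / (m + u₁ m) ^ 2) * (m + u₁ m) ^ 2) < 0) ∧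
    StrictAntiOn (fun m => u₁ m + (s + δ * u₁ m) / (s + δ)) (Ioi (0 : ℝ)) := by
  have hB0 : 0 < B := hB ▸ by positivity
  have hderiv := fun m (hm : 0 < m) => hasDerivAt_equilibrium (by positivity : 0 < h + B)
    (sub_neg.2 heB) (fun x hx => ⟨(hroot x hx).1, by linear_combination (hroot x hx).2⟩) hm
  refine ⟨hderiv, ?_⟩
  have hanti : StrictAntiOn u₁ (Ioi 0) :=
    strictAntiOn_of_hasDerivWithinAt_neg (convex_Ioi 0)
      (fun m hm => (hderiv m hm).2.1.continuousAt.continuousWithinAt)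
      (fun m hm => (hderiv m (interior_subset hm)).2.1.hasDerivWithinAt)
      (fun m hm => (hderiv m (interior_subset hm)).2.2)
  have hT : StrictMono fun v : ℝ => v + (s + δ * v) / (s + δ) := fun v w hvw => by
    dsimp only; gcongr
  exact hT.comp_strictAntiOn hanti

/-- For h, δ, s > 0, B = sδ/(s+δ), 0 < e < B, let u₁(m) be (for
each m > 0) the unique positive root of (h+B)u² + [m(h+B)+e−1−B]u + m(e−B) = 0.
Then u₁ is differentiable with du₁/dm = −u₁/[C(m+u₁)²] < 0 where
C = (h+B) − m/(m+u₁)² > 0, and the total population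
T(m) = u₁(m) + (s+δu₁(m))/(s+δ) is strictly decreasing on (0,∞). -/
theorem stmt14 (h δ s e : ℝ) (hh : 0 < h) (hδ : 0 < δ) (hs : 0 < s)
    (B : ℝ) (hB : B = s * δ / (s + δ)) (he0 : 0 < e) (heB : e < B)
    (u₁ : ℝ → ℝ)
    (hroot : ∀ m : ℝ, 0 < m → 0 < u₁ m ∧
      (h + B) * (u₁ m) ^ 2 + (m * (h + B) + e - 1 - B) * (u₁ m) + m * (e - B) = 0)
    (huniq : ∀ m : ℝ, 0 < m → ∀ u : ℝ, 0 < u →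
      (h + B) * u ^ 2 + (m * (h + B) + e - 1 - B) * u + m * (e - B) = 0 → u = u₁ m) :
    (∀ m : ℝ, 0 < m →
      ((h + B) - m / (m + u₁ m) ^ 2 > 0) ∧
      HasDerivAt u₁ (-(u₁ m) / (((h + B) - m / (m + u₁ m) ^ 2) * (m + u₁ m) ^ 2)) m ∧
      -(u₁ m) / (((h + B) - m / (m + u₁ m) ^ 2) * (m + u₁ m) ^ 2) < 0) ∧
    StrictAntiOn (fun m => u₁ m + (s + δ * u₁ m) / (s + δ)) (Ioi (0 : ℝ)) :=
  stmt14_general h δ s e hh hδ hs B hB heB u₁ hroot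
end
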